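/- Policy gradient theorem (finite case): for a finite MDP with γ ∈ [0,1) and differentiable policy family π_θ(a|s) > 0, the gradient of J(π_θ) = ∑_s d₀(s) V^{π_θ}(s) satisfies ∇θ J(π_θ) = ∑_s ρ_{π_θ}(s) ∑_a π_θ(a|s) ∇θ log π_θ(a|s) Q^{π_θ}(s,a), where ρ_{π_θ}(s) = ∑_{s'} d₀(s') ∑_{k≥0} γ^k [P_{π_θ}^k]_{s' s} is the discounted state visitation measure. -/

import Mathlib

open scoped BigOperators

/-- The one-step expectation operator of policy `π` in an MDP with transition kernel `P`:
`(expOp P π f)(s,a) = ∑_{s'} P(s'|s,a) ∑_{a'} π(a'|s') f(s',a')`. -/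
noncomputable def expOp {S A : Type*} [Fintype S] [Fintype A]
    (P : S → A → S → ℝ) (π : S → A → ℝ) (f : S → A → ℝ) : S → A → ℝ :=
  fun s a => ∑ s', P s a s' * ∑ a', π s' a' * f s' a'

/-- The state-action value function `Q^π(s,a)`, the expected discounted sum of rewards
`∑_{k≥0} γ^k r(s_k, a_k)` starting from `(s,a)` and following `π`, written via the
`k`-step expectation operators: `Q^π = ∑_{k≥0} γ^k (expOp^k r)`. -/
noncomputable def Qval {S A : Type*} [Fintype S] [Fintype A]
    (γ : ℝ) (P : S → A → S → ℝ) (π : S → A → ℝ) (r : S → A → ℝ) : S → A → ℝ :=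
  fun s a => ∑' k : ℕ, γ ^ k * ((expOp P π)^[k] r) s a

/-- The state value function `V^π(s) = ∑_a π(a|s) Q^π(s,a)`. -/
noncomputable def Vval {S A : Type*} [Fintype S] [Fintype A]
    (γ : ℝ) (P : S → A → S → ℝ) (π : S → A → ℝ) (r : S → A → ℝ) : S → ℝ :=
  fun s => ∑ a, π s a * Qval γ P π r s a

/-- The advantage function `A^π(s,a) = Q^π(s,a) − V^π(s)`. -/
noncomputable def Adv {S A : Type*} [Fintype S] [Fintype A]
    (γ : ℝ) (P : S → A → S → ℝ) (π : S → A → ℝ) (r : S → A → ℝ) : S → A → ℝ :=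
  fun s a => Qval γ P π r s a - Vval γ P π r s

/-- The state transition matrix induced by policy `π`. -/
noncomputable def Pmat {S A : Type*} [Fintype S] [Fintype A]
    (P : S → A → S → ℝ) (π : S → A → ℝ) : Matrix S S ℝ :=
  fun s s' => ∑ a, π s a * P s a s'

/-- The (unnormalized) discounted state visitation measure
`ρ_π(s) = ∑_{k≥0} γ^k Pr_π(s_k = s | s₀ ∼ d₀)`. -/
noncomputable def occup {S A : Type*} [Fintype S] [Fintype A] [DecidableEq S]
    (γ : ℝ) (P : S → A → S → ℝ) (π : S → A → ℝ) (d0 : S → ℝ) : S → ℝ :=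
  fun s => ∑' k : ℕ, γ ^ k * ∑ s0, d0 s0 * (Pmat P π ^ k) s0 s

/-- The expected return `J(π) = E_{s₀∼d₀}[V^π(s₀)]`. -/
noncomputable def Jfun {S A : Type*} [Fintype S] [Fintype A]
    (γ : ℝ) (P : S → A → S → ℝ) (π : S → A → ℝ) (r : S → A → ℝ) (d0 : S → ℝ) : ℝ :=
  ∑ s, d0 s * Vval γ P π r s

set_option linter.unusedSectionVars false
set_option maxHeartbeats 1000000

section aux
open Matrix

variable {S A : Type*} [Fintype S] [Fintype A] [DecidableEq S]
variable {γ : ℝ} {P : S → A → S → ℝ} {p : S → A → ℝ}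

lemma Pmat_nonneg (hP0 : ∀ s a s', 0 ≤ P s a s') (hp0 : ∀ s a, 0 ≤ p s a) (s s' : S) :
    0 ≤ Pmat P p s s' :=
  Finset.sum_nonneg fun a _ => mul_nonneg (hp0 s a) (hP0 s a s')

lemma Pmat_row (hP1 : ∀ s a, ∑ s', P s a s' = 1) (hp1 : ∀ s, ∑ a, p s a = 1) (s : S) :
    ∑ s', Pmat P p s s' = 1 := by
  simp only [Pmat]
  rw [Finset.sum_comm]
  calc ∑ a, ∑ s', p s a * P s a s' = ∑ a, p s a := by
        refine Finset.sum_congr rfl fun a _ => ?_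
        rw [← Finset.mul_sum, hP1 s a, mul_one]
    _ = 1 := hp1 s

lemma Pmat_pow_nonneg (hP0 : ∀ s a s', 0 ≤ P s a s') (hp0 : ∀ s a, 0 ≤ p s a) (k : ℕ) :
    ∀ s s', 0 ≤ (Pmat P p ^ k) s s' := by
  induction k with
  | zero => intro s s'; simp [Matrix.one_apply]; positivity
  | succ k ih =>
      intro s s'
      rw [pow_succ, Matrix.mul_apply]
      exact Finset.sum_nonneg fun t _ => mul_nonneg (ih s t) (Pmat_nonneg hP0 hp0 t s')

lemma Pmat_pow_row (hP1 : ∀ s a, ∑ s', P s a s' = 1) (hp1 : ∀ s, ∑ a, p s a = 1) (k : ℕ) :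
    ∀ s, ∑ s', (Pmat P p ^ k) s s' = 1 := by
  induction k with
  | zero => intro s; simp [Matrix.one_apply]
  | succ k ih =>
      intro s
      simp only [pow_succ, Matrix.mul_apply]
      rw [Finset.sum_comm]
      calc ∑ t, ∑ s', (Pmat P p ^ k) s t * Pmat P p t s'
          = ∑ t, (Pmat P p ^ k) s t := by
            refine Finset.sum_congr rfl fun t _ => ?_
            rw [← Finset.mul_sum, Pmat_row hP1 hp1 t, mul_one]
        _ = 1 := ih s

lemma Pmat_pow_le_one (hP0 : ∀ s a s', 0 ≤ P s a s') (hP1 : ∀ s a, ∑ s', P s a s' = 1)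
    (hp0 : ∀ s a, 0 ≤ p s a) (hp1 : ∀ s, ∑ a, p s a = 1) (k : ℕ) (s s' : S) :
    (Pmat P p ^ k) s s' ≤ 1 := by
  calc (Pmat P p ^ k) s s' ≤ ∑ t, (Pmat P p ^ k) s t :=
        Finset.single_le_sum (fun t _ => Pmat_pow_nonneg hP0 hp0 k s t) (Finset.mem_univ s')
    _ = 1 := Pmat_pow_row hP1 hp1 k s

lemma summable_geomP (hγ0 : 0 ≤ γ) (hγ1 : γ < 1) (hP0 : ∀ s a s', 0 ≤ P s a s')
    (hP1 : ∀ s a, ∑ s', P s a s' = 1) (hp0 : ∀ s a, 0 ≤ p s a) (hp1 : ∀ s, ∑ a, p s a = 1)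
    (s s' : S) : Summable (fun k : ℕ => γ ^ k * (Pmat P p ^ k) s s') := by
  refine Summable.of_nonneg_of_le (fun k => mul_nonneg (pow_nonneg hγ0 k) (Pmat_pow_nonneg hP0 hp0 k s s'))
    (fun k => ?_) (summable_geometric_of_lt_one hγ0 hγ1)
  calc γ ^ k * (Pmat P p ^ k) s s' ≤ γ ^ k * 1 :=
        mul_le_mul_of_nonneg_left (Pmat_pow_le_one hP0 hP1 hp0 hp1 k s s') (pow_nonneg hγ0 k)
    _ = γ ^ k := mul_one _

noncomputable def Kmat (γ : ℝ) (P : S → A → S → ℝ) (p : S → A → ℝ) : Matrix S S ℝ :=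
  fun s s' => ∑' k : ℕ, γ ^ k * (Pmat P p ^ k) s s'

section inv
variable (hγ0 : 0 ≤ γ) (hγ1 : γ < 1) (hP0 : ∀ s a s', 0 ≤ P s a s')
  (hP1 : ∀ s a, ∑ s', P s a s' = 1) (hp0 : ∀ s a, 0 ≤ p s a) (hp1 : ∀ s, ∑ a, p s a = 1)

include hγ0 hγ1 hP0 hP1 hp0 hp1

lemma PK_apply (s t : S) :
    (Pmat P p * Kmat γ P p) s t = ∑' k : ℕ, γ ^ k * (Pmat P p ^ (k + 1)) s t := by
  rw [Matrix.mul_apply]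
  calc ∑ s', Pmat P p s s' * Kmat γ P p s' t
      = ∑ s', ∑' k : ℕ, Pmat P p s s' * (γ ^ k * (Pmat P p ^ k) s' t) :=
        Finset.sum_congr rfl fun s' _ => tsum_mul_left.symm
    _ = ∑' k : ℕ, ∑ s', Pmat P p s s' * (γ ^ k * (Pmat P p ^ k) s' t) :=
        (Summable.tsum_finsetSum fun s' _ =>
          (summable_geomP hγ0 hγ1 hP0 hP1 hp0 hp1 s' t).mul_left _).symm
    _ = ∑' k : ℕ, γ ^ k * (Pmat P p ^ (k + 1)) s t := by
        refine tsum_congr fun k => ?_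
        rw [pow_succ', Matrix.mul_apply, Finset.mul_sum]
        exact Finset.sum_congr rfl fun s' _ => by ring

lemma M_mul_K : (1 - γ • Pmat P p) * Kmat γ P p = 1 := by
  ext s t
  rw [sub_mul, one_mul, Matrix.smul_mul, Matrix.sub_apply, Matrix.smul_apply,
    PK_apply hγ0 hγ1 hP0 hP1 hp0 hp1, smul_eq_mul, ← tsum_mul_left]
  have hsum : Summable (fun k : ℕ => γ ^ k * (Pmat P p ^ k) s t) :=
    summable_geomP hγ0 hγ1 hP0 hP1 hp0 hp1 s t
  have h0 : (Kmat γ P p) s t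
      = γ ^ 0 * (Pmat P p ^ 0) s t + ∑' k : ℕ, γ ^ (k + 1) * (Pmat P p ^ (k + 1)) s t :=
    Summable.tsum_eq_zero_add hsum
  rw [h0]
  have : ∀ k : ℕ, γ * (γ ^ k * (Pmat P p ^ (k + 1)) s t) = γ ^ (k + 1) * (Pmat P p ^ (k + 1)) s t :=
    fun k => by ring
  rw [tsum_congr this]
  simp [Matrix.one_apply]

lemma K_mul_M : Kmat γ P p * (1 - γ • Pmat P p) = 1 :=
  mul_eq_one_comm.mp (M_mul_K hγ0 hγ1 hP0 hP1 hp0 hp1)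

end inv

section bellman
variable (hγ0 : 0 ≤ γ) (hγ1 : γ < 1) (hP0 : ∀ s a s', 0 ≤ P s a s')
  (hP1 : ∀ s a, ∑ s', P s a s' = 1) (hp0 : ∀ s a, 0 ≤ p s a) (hp1 : ∀ s, ∑ a, p s a = 1)
  (r : S → A → ℝ)

include hγ0 hγ1 hP0 hP1 hp0 hp1

lemma iter_bound (k : ℕ) : ∀ s a, |((expOp P p)^[k] r) s a| ≤ ∑ s, ∑ a, |r s a| := by
  set R := ∑ s, ∑ a, |r s a| with hR
  induction k with
  | zero =>
      intro s a
      simp only [Function.iterate_zero, id]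
      calc |r s a| ≤ ∑ a, |r s a| :=
            Finset.single_le_sum (f := fun a => |r s a|) (fun a _ => abs_nonneg _)
              (Finset.mem_univ a)
        _ ≤ R := Finset.single_le_sum (f := fun s => ∑ a, |r s a|)
            (fun s _ => Finset.sum_nonneg fun a _ => abs_nonneg _) (Finset.mem_univ s)
  | succ k ih =>
      intro s a
      rw [Function.iterate_succ_apply']
      have hinner : ∀ s', |∑ a', p s' a' * ((expOp P p)^[k] r) s' a'| ≤ R := by
        intro s'
        calc |∑ a', p s' a' * ((expOp P p)^[k] r) s' a'|
            ≤ ∑ a', |p s' a' * ((expOp P p)^[k] r) s' a'| := Finset.abs_sum_le_sum_abs _ _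
          _ ≤ ∑ a', p s' a' * R := by
              refine Finset.sum_le_sum fun a' _ => ?_
              rw [abs_mul, abs_of_nonneg (hp0 s' a')]
              exact mul_le_mul_of_nonneg_left (ih s' a') (hp0 s' a')
          _ = R := by rw [← Finset.sum_mul, hp1 s', one_mul]
      calc |expOp P p ((expOp P p)^[k] r) s a|
          ≤ ∑ s', |P s a s' * ∑ a', p s' a' * ((expOp P p)^[k] r) s' a'| :=
            Finset.abs_sum_le_sum_abs _ _
        _ ≤ ∑ s', P s a s' * R := by
            refine Finset.sum_le_sum fun s' _ => ?_
            rw [abs_mul, abs_of_nonneg (hP0 s a s')]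
            exact mul_le_mul_of_nonneg_left (hinner s') (hP0 s a s')
        _ = R := by rw [← Finset.sum_mul, hP1 s a, one_mul]

lemma summable_Q (s : S) (a : A) :
    Summable (fun k : ℕ => γ ^ k * ((expOp P p)^[k] r) s a) := by
  refine Summable.of_norm_bounded (g := fun k : ℕ => γ ^ k * ∑ s, ∑ a, |r s a|)
    ((summable_geometric_of_lt_one hγ0 hγ1).mul_right _) (fun k => ?_)
  rw [Real.norm_eq_abs, abs_mul, abs_of_nonneg (pow_nonneg hγ0 k)]
  exact mul_le_mul_of_nonneg_left (iter_bound hγ0 hγ1 hP0 hP1 hp0 hp1 r k s a)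
    (pow_nonneg hγ0 k)

lemma Q_bellman (s : S) (a : A) :
    Qval γ P p r s a = r s a + γ * ∑ s', P s a s' * Vval γ P p r s' := by
  have hsum := summable_Q hγ0 hγ1 hP0 hP1 hp0 hp1 r
  have h0 : Qval γ P p r s a
      = γ ^ 0 * ((expOp P p)^[0] r) s a
        + ∑' k : ℕ, γ ^ (k + 1) * ((expOp P p)^[k + 1] r) s a :=
    Summable.tsum_eq_zero_add (hsum s a)
  rw [h0]
  simp only [pow_zero, Function.iterate_zero, id, one_mul]
  congr 1
  calc ∑' k : ℕ, γ ^ (k + 1) * ((expOp P p)^[k + 1] r) s a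
      = ∑' k : ℕ, ∑ s', P s a s' *
          ∑ a', p s' a' * (γ * (γ ^ k * ((expOp P p)^[k] r) s' a')) := by
        refine tsum_congr fun k => ?_
        rw [Function.iterate_succ_apply']
        show γ ^ (k + 1) * (∑ s', P s a s' * ∑ a', p s' a' * ((expOp P p)^[k] r) s' a') = _
        simp only [Finset.mul_sum]
        exact Finset.sum_congr rfl fun s' _ => Finset.sum_congr rfl fun a' _ => by ring
    _ = ∑ s', ∑' k : ℕ, P s a s' *
          ∑ a', p s' a' * (γ * (γ ^ k * ((expOp P p)^[k] r) s' a')) := by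
        refine Summable.tsum_finsetSum fun s' _ => ?_
        refine Summable.mul_left _ ?_
        exact summable_sum fun a' _ => ((hsum s' a').mul_left γ).mul_left (p s' a')
    _ = γ * ∑ s', P s a s' * Vval γ P p r s' := by
        rw [Finset.mul_sum]
        refine Finset.sum_congr rfl fun s' _ => ?_
        rw [tsum_mul_left]
        rw [Summable.tsum_finsetSum (fun a' _ => ((hsum s' a').mul_left γ).mul_left (p s' a'))]
        simp only [tsum_mul_left, Vval, Qval]
        simp only [Finset.mul_sum]
        exact Finset.sum_congr rfl fun a' _ => by ring

lemma V_bellman (s : S) :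
    Vval γ P p r s = (∑ a, p s a * r s a) + γ * ∑ s', Pmat P p s s' * Vval γ P p r s' := by
  show ∑ a, p s a * Qval γ P p r s a = _
  calc ∑ a, p s a * Qval γ P p r s a
      = ∑ a, (p s a * r s a + ∑ s', γ * (p s a * (P s a s' * Vval γ P p r s'))) := by
        refine Finset.sum_congr rfl fun a _ => ?_
        rw [Q_bellman hγ0 hγ1 hP0 hP1 hp0 hp1 r s a, mul_add, Finset.mul_sum, Finset.mul_sum]
        congr 1
        exact Finset.sum_congr rfl fun s' _ => by ring
    _ = (∑ a, p s a * r s a) + ∑ a, ∑ s', γ * (p s a * (P s a s' * Vval γ P p r s')) :=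
        Finset.sum_add_distrib
    _ = _ := by
        congr 1
        rw [Finset.sum_comm, Finset.mul_sum]
        refine Finset.sum_congr rfl fun s' _ => ?_
        simp only [Pmat, Finset.sum_mul, Finset.mul_sum]
        exact Finset.sum_congr rfl fun a _ => by ring

lemma M_mulVec_V :
    (1 - γ • Pmat P p) *ᵥ (Vval γ P p r) = (fun s => ∑ a, p s a * r s a) := by
  funext s
  rw [Matrix.sub_mulVec, Matrix.one_mulVec, Matrix.smul_mulVec]
  show Vval γ P p r s - (γ • (Pmat P p *ᵥ Vval γ P p r)) s = _
  rw [Pi.smul_apply, smul_eq_mul]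
  simp only [Matrix.mulVec, dotProduct]
  rw [V_bellman hγ0 hγ1 hP0 hP1 hp0 hp1 r s]
  ring

lemma V_solve :
    Vval γ P p r = Kmat γ P p *ᵥ (fun s => ∑ a, p s a * r s a) := by
  have h : Kmat γ P p *ᵥ ((1 - γ • Pmat P p) *ᵥ (Vval γ P p r))
      = Kmat γ P p *ᵥ (fun s => ∑ a, p s a * r s a) := by
    rw [M_mulVec_V hγ0 hγ1 hP0 hP1 hp0 hp1 r]
  rwa [Matrix.mulVec_mulVec, K_mul_M hγ0 hγ1 hP0 hP1 hp0 hp1, Matrix.one_mulVec] at h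

lemma occup_eq (d0 : S → ℝ) (s : S) :
    occup γ P p d0 s = ∑ s0, d0 s0 * Kmat γ P p s0 s := by
  show ∑' k : ℕ, γ ^ k * ∑ s0, d0 s0 * (Pmat P p ^ k) s0 s = _
  calc ∑' k : ℕ, γ ^ k * ∑ s0, d0 s0 * (Pmat P p ^ k) s0 s
      = ∑' k : ℕ, ∑ s0, d0 s0 * (γ ^ k * (Pmat P p ^ k) s0 s) := by
        refine tsum_congr fun k => ?_
        rw [Finset.mul_sum]
        exact Finset.sum_congr rfl fun s0 _ => by ring
    _ = ∑ s0, ∑' k : ℕ, d0 s0 * (γ ^ k * (Pmat P p ^ k) s0 s) :=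
        Summable.tsum_finsetSum fun s0 _ => (summable_geomP hγ0 hγ1 hP0 hP1 hp0 hp1 s0 s).mul_left _
    _ = ∑ s0, d0 s0 * Kmat γ P p s0 s :=
        Finset.sum_congr rfl fun s0 _ => tsum_mul_left
end bellman
end aux


lemma differentiableAt_det {n : Type*} [Fintype n] [DecidableEq n]
    {E : Type*} [NormedAddCommGroup E] [NormedSpace ℝ E]
    {M : E → Matrix n n ℝ} {x : E} (h : ∀ i j, DifferentiableAt ℝ (fun θ => M θ i j) x) :
    DifferentiableAt ℝ (fun θ => (M θ).det) x := by
  have hrw : (fun θ => (M θ).det)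
      = fun θ => ∑ σ : Equiv.Perm n, ((Equiv.Perm.sign σ : ℤ) : ℝ) * ∏ i, M θ (σ i) i := by
    funext θ
    rw [Matrix.det_apply]
    exact Finset.sum_congr rfl fun σ _ => by rw [Units.smul_def, zsmul_eq_mul]
  rw [hrw]
  refine DifferentiableAt.fun_sum fun σ _ => (differentiableAt_const _).mul ?_
  exact (HasFDerivAt.finset_prod (u := Finset.univ) (g := fun i θ => M θ (σ i) i)
    (fun i _ => ((h (σ i) i).hasFDerivAt))).differentiableAt


open Matrix in
/-- Policy gradient theorem (finite case).  For a finite MDP with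
`γ ∈ [0,1)` and a differentiable, strictly positive policy family `π_θ` with
`∇θ π_θ(a|s) = g s a` at `θ₀`, the objective `J(π_θ) = ∑_s d₀(s) V^{π_θ}(s)` satisfies
`∇θ J = ∑_s ρ_{π_θ₀}(s) ∑_a π_θ₀(a|s) ∇θ log π_θ₀(a|s) Q^{π_θ₀}(s,a)`,
where `∇θ log π_θ₀(a|s) = (π θ₀ s a)⁻¹ • g s a` and
`ρ_{π_θ}(s) = ∑_{s'} d₀(s') ∑_{k≥0} γ^k [P_{π_θ}^k]_{s' s}`. -/
theorem policy_gradient_theorem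
    {d : ℕ} {S A : Type*} [Fintype S] [Fintype A] [DecidableEq S]
    (γ : ℝ) (hγ0 : 0 ≤ γ) (hγ1 : γ < 1)
    (P : S → A → S → ℝ) (hP0 : ∀ s a s', 0 ≤ P s a s') (hP1 : ∀ s a, ∑ s', P s a s' = 1)
    (π : EuclideanSpace ℝ (Fin d) → S → A → ℝ)
    (hπpos : ∀ θ s a, 0 < π θ s a) (hπ1 : ∀ θ s, ∑ a, π θ s a = 1)
    (r : S → A → ℝ)
    (d0 : S → ℝ) (hd0 : ∀ s, 0 ≤ d0 s) (hd1 : ∑ s, d0 s = 1)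
    (θ₀ : EuclideanSpace ℝ (Fin d))
    (g : S → A → EuclideanSpace ℝ (Fin d))
    (hgrad : ∀ s a, HasGradientAt (fun θ => π θ s a) (g s a) θ₀) :
    HasGradientAt (fun θ => Jfun γ P (π θ) r d0)
      (∑ s, occup γ P (π θ₀) d0 s •
        ∑ a, (π θ₀ s a * Qval γ P (π θ₀) r s a) • ((π θ₀ s a)⁻¹ • g s a)) θ₀ := by
  classical
  have hp0 : ∀ θ s a, 0 ≤ π θ s a := fun θ s a => (hπpos θ s a).le
  set L : S → A → (EuclideanSpace ℝ (Fin d) →L[ℝ] ℝ) :=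
    fun s a => InnerProductSpace.toDual ℝ _ (g s a) with hLdef
  have hL : ∀ s a, HasFDerivAt (fun θ => π θ s a) (L s a) θ₀ := fun s a =>
    hasGradientAt_iff_hasFDerivAt.mp (hgrad s a)
  have hLval : ∀ s a (h : EuclideanSpace ℝ (Fin d)), L s a h = inner ℝ (g s a) h := fun s a h =>
    InnerProductSpace.toDual_apply_apply
  have hFentry : ∀ s s', HasFDerivAt
      (fun θ => ((1 : Matrix S S ℝ) - γ • Pmat P (π θ)) s s')
      ((0 : EuclideanSpace ℝ (Fin d) →L[ℝ] ℝ) - γ • ∑ a, P s a s' • L s a) θ₀ := by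
    intro s s'
    have h1 : HasFDerivAt (fun θ => ∑ a, π θ s a * P s a s') (∑ a, P s a s' • L s a) θ₀ :=
      HasFDerivAt.fun_sum fun a _ => (hL s a).mul_const (P s a s')
    exact (hasFDerivAt_const ((1 : Matrix S S ℝ) s s') θ₀).sub (h1.const_mul γ)
  have hdet : ∀ θ, ((1 : Matrix S S ℝ) - γ • Pmat P (π θ)).det ≠ 0 := by
    intro θ
    have := invertibleOfRightInverse
      (h := M_mul_K hγ0 hγ1 hP0 hP1 (hp0 θ) (hπ1 θ))
    exact (Matrix.isUnit_det_of_invertible _).ne_zero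
  have hEdiff : ∀ s s', DifferentiableAt ℝ
      (fun θ => ((1 : Matrix S S ℝ) - γ • Pmat P (π θ)) s s') θ₀ :=
    fun s s' => (hFentry s s').differentiableAt
  have hAdjdiff : ∀ i j, DifferentiableAt ℝ
      (fun θ => ((1 : Matrix S S ℝ) - γ • Pmat P (π θ)).adjugate i j) θ₀ := by
    intro i j
    have hrw : (fun θ => ((1 : Matrix S S ℝ) - γ • Pmat P (π θ)).adjugate i j)
        = fun θ => (((1 : Matrix S S ℝ) - γ • Pmat P (π θ)).updateRow j (Pi.single i 1)).det :=
      funext fun θ => Matrix.adjugate_apply _ _ _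
    rw [hrw]
    refine differentiableAt_det fun i' j' => ?_
    by_cases hij : i' = j
    · simpa [Matrix.updateRow_apply, hij] using differentiableAt_const (Pi.single i (1:ℝ) j')
    · simpa [Matrix.updateRow_apply, hij] using hEdiff i' j'
  have hCramer : ∀ θ s, Vval γ P (π θ) r s
      = (((1 : Matrix S S ℝ) - γ • Pmat P (π θ)).det)⁻¹
        * ∑ s', ((1 : Matrix S S ℝ) - γ • Pmat P (π θ)).adjugate s s'
            * ∑ a, π θ s' a * r s' a := by
    intro θ s
    have h1 := M_mulVec_V hγ0 hγ1 hP0 hP1 (hp0 θ) (hπ1 θ) r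
    have h2 : ((1 : Matrix S S ℝ) - γ • Pmat P (π θ)).adjugate
        *ᵥ (((1 : Matrix S S ℝ) - γ • Pmat P (π θ)) *ᵥ Vval γ P (π θ) r)
        = ((1 : Matrix S S ℝ) - γ • Pmat P (π θ)).det • Vval γ P (π θ) r := by
      rw [Matrix.mulVec_mulVec, Matrix.adjugate_mul, Matrix.smul_mulVec,
        Matrix.one_mulVec]
    rw [h1] at h2
    have h3 := congrFun h2 s
    rw [Pi.smul_apply, smul_eq_mul] at h3
    simp only [Matrix.mulVec, dotProduct] at h3
    rw [eq_inv_mul_iff_mul_eq₀ (hdet θ)]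
    exact h3.symm
  have hVdiff : ∀ s, DifferentiableAt ℝ (fun θ => Vval γ P (π θ) r s) θ₀ := by
    intro s
    have hrw : (fun θ => Vval γ P (π θ) r s)
        = fun θ => (((1 : Matrix S S ℝ) - γ • Pmat P (π θ)).det)⁻¹
          * ∑ s', ((1 : Matrix S S ℝ) - γ • Pmat P (π θ)).adjugate s s'
              * ∑ a, π θ s' a * r s' a := funext fun θ => hCramer θ s
    rw [hrw]
    refine DifferentiableAt.mul
      (DifferentiableAt.inv (differentiableAt_det hEdiff) (hdet θ₀)) ?_
    refine DifferentiableAt.fun_sum fun s' _ => DifferentiableAt.mul (hAdjdiff s s') ?_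
    exact DifferentiableAt.fun_sum fun a _ => (hL s' a).differentiableAt.mul_const _
  set Φ : S → (EuclideanSpace ℝ (Fin d) →L[ℝ] ℝ) :=
    fun s => fderiv ℝ (fun θ => Vval γ P (π θ) r s) θ₀ with hΦdef
  have hΦ : ∀ s, HasFDerivAt (fun θ => Vval γ P (π θ) r s) (Φ s) θ₀ :=
    fun s => (hVdiff s).hasFDerivAt
  have hBellFun : ∀ s, (fun θ =>
        ∑ s', ((1 : Matrix S S ℝ) - γ • Pmat P (π θ)) s s' * Vval γ P (π θ) r s')
      = fun θ => ∑ a, π θ s a * r s a := by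
    intro s; funext θ
    have := congrFun (M_mulVec_V hγ0 hγ1 hP0 hP1 (hp0 θ) (hπ1 θ) r) s
    simpa [Matrix.mulVec, dotProduct] using this
  have hD2 : ∀ s, HasFDerivAt (fun θ => ∑ a, π θ s a * r s a) (∑ a, r s a • L s a) θ₀ :=
    fun s => HasFDerivAt.fun_sum fun a _ => (hL s a).mul_const (r s a)
  have hDeq : ∀ s, (∑ s', (((1 : Matrix S S ℝ) - γ • Pmat P (π θ₀)) s s' • Φ s'
        + Vval γ P (π θ₀) r s'
          • ((0 : EuclideanSpace ℝ (Fin d) →L[ℝ] ℝ) - γ • ∑ a, P s a s' • L s a)))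
      = ∑ a, r s a • L s a := by
    intro s
    have h1 : HasFDerivAt
        (fun θ => ∑ s', ((1 : Matrix S S ℝ) - γ • Pmat P (π θ)) s s' * Vval γ P (π θ) r s')
        (∑ s', (((1 : Matrix S S ℝ) - γ • Pmat P (π θ₀)) s s' • Φ s'
          + Vval γ P (π θ₀) r s'
            • ((0 : EuclideanSpace ℝ (Fin d) →L[ℝ] ℝ) - γ • ∑ a, P s a s' • L s a))) θ₀ :=
      HasFDerivAt.fun_sum fun s' _ => (hFentry s s').mul (hΦ s')
    rw [hBellFun s] at h1
    exact h1.unique (hD2 s)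
  have main : ∀ h, ∑ s, d0 s * Φ s h
      = ∑ s, occup γ P (π θ₀) d0 s * ∑ a, L s a h * Qval γ P (π θ₀) r s a := by
    intro h
    have hkey : ∀ s, ∑ s', ((1 : Matrix S S ℝ) - γ • Pmat P (π θ₀)) s s' * Φ s' h
        = ∑ a, r s a * L s a h
          + γ * ∑ s', Vval γ P (π θ₀) r s' * ∑ a, P s a s' * L s a h := by
      intro s
      have hth := congrArg (fun T : EuclideanSpace ℝ (Fin d) →L[ℝ] ℝ => T h) (hDeq s)
      simp only [ContinuousLinearMap.coe_sum', Finset.sum_apply,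
        ContinuousLinearMap.add_apply, ContinuousLinearMap.coe_smul', Pi.smul_apply,
        ContinuousLinearMap.sub_apply, ContinuousLinearMap.zero_apply,
        smul_eq_mul] at hth
      rw [Finset.sum_add_distrib] at hth
      have hneg : ∑ s', Vval γ P (π θ₀) r s'
            * (0 - γ * ∑ a, P s a s' * L s a h)
          = -(γ * ∑ s', Vval γ P (π θ₀) r s' * ∑ a, P s a s' * L s a h) := by
        rw [Finset.mul_sum, ← Finset.sum_neg_distrib]
        exact Finset.sum_congr rfl fun s' _ => by ring
      rw [hneg] at hth
      linarith [hth]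
    have hu : ((1 : Matrix S S ℝ) - γ • Pmat P (π θ₀)) *ᵥ (fun s' => Φ s' h)
        = fun s => ∑ a, L s a h * Qval γ P (π θ₀) r s a := by
      funext s
      show ∑ s', ((1 : Matrix S S ℝ) - γ • Pmat P (π θ₀)) s s' * Φ s' h = _
      rw [hkey s]
      calc ∑ a, r s a * L s a h
            + γ * ∑ s', Vval γ P (π θ₀) r s' * ∑ a, P s a s' * L s a h
          = ∑ a, r s a * L s a h
            + ∑ a, ∑ s', γ * (L s a h * (P s a s' * Vval γ P (π θ₀) r s')) := by
            congr 1
            rw [Finset.mul_sum, Finset.sum_comm]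
            refine Finset.sum_congr rfl fun s' _ => ?_
            rw [Finset.mul_sum, Finset.mul_sum]
            exact Finset.sum_congr rfl fun a _ => by ring
        _ = ∑ a, L s a h * Qval γ P (π θ₀) r s a := by
            rw [← Finset.sum_add_distrib]
            refine Finset.sum_congr rfl fun a _ => ?_
            rw [Q_bellman hγ0 hγ1 hP0 hP1 (hp0 θ₀) (hπ1 θ₀) r s a, mul_add]
            congr 1
            · ring
            · rw [Finset.mul_sum, Finset.mul_sum]
              exact Finset.sum_congr rfl fun s' _ => by ring
    have hsolve : (fun s' => Φ s' h)
        = Kmat γ P (π θ₀) *ᵥ (fun s => ∑ a, L s a h * Qval γ P (π θ₀) r s a) := by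
      have hc := congrArg (fun v => Kmat γ P (π θ₀) *ᵥ v) hu
      simpa [Matrix.mulVec_mulVec, K_mul_M hγ0 hγ1 hP0 hP1 (hp0 θ₀) (hπ1 θ₀),
        Matrix.one_mulVec] using hc
    calc ∑ s, d0 s * Φ s h
        = ∑ s, d0 s * ∑ s', Kmat γ P (π θ₀) s s'
            * ∑ a, L s' a h * Qval γ P (π θ₀) r s' a := by
          refine Finset.sum_congr rfl fun s _ => ?_
          rw [congrFun hsolve s]
          simp [Matrix.mulVec, dotProduct]
      _ = ∑ s, ∑ s', d0 s * (Kmat γ P (π θ₀) s s'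
            * ∑ a, L s' a h * Qval γ P (π θ₀) r s' a) :=
          Finset.sum_congr rfl fun s _ => by rw [Finset.mul_sum]
      _ = ∑ s', ∑ s, d0 s * (Kmat γ P (π θ₀) s s'
            * ∑ a, L s' a h * Qval γ P (π θ₀) r s' a) := Finset.sum_comm
      _ = ∑ s', (∑ s, d0 s * Kmat γ P (π θ₀) s s')
            * ∑ a, L s' a h * Qval γ P (π θ₀) r s' a := by
          refine Finset.sum_congr rfl fun s' _ => ?_
          rw [Finset.sum_mul]
          exact Finset.sum_congr rfl fun s _ => by ring
      _ = ∑ s, occup γ P (π θ₀) d0 s * ∑ a, L s a h * Qval γ P (π θ₀) r s a :=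
          Finset.sum_congr rfl fun s' _ => by
            rw [occup_eq hγ0 hγ1 hP0 hP1 (hp0 θ₀) (hπ1 θ₀) d0 s']
  have hJ : HasFDerivAt (fun θ => Jfun γ P (π θ) r d0) (∑ s, d0 s • Φ s) θ₀ :=
    HasFDerivAt.fun_sum fun s _ => (hΦ s).const_mul (d0 s)
  rw [hasGradientAt_iff_hasFDerivAt]
  have hG : InnerProductSpace.toDual ℝ (EuclideanSpace ℝ (Fin d))
      (∑ s, occup γ P (π θ₀) d0 s •
        ∑ a, (π θ₀ s a * Qval γ P (π θ₀) r s a) • ((π θ₀ s a)⁻¹ • g s a))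
      = ∑ s, d0 s • Φ s := by
    refine ContinuousLinearMap.ext fun h => ?_
    rw [InnerProductSpace.toDual_apply_apply]
    have hrhs : (∑ s, d0 s • Φ s) h = ∑ s, d0 s * Φ s h := by
      simp [ContinuousLinearMap.coe_sum', Finset.sum_apply]
    rw [hrhs, main h, sum_inner]
    refine Finset.sum_congr rfl fun s _ => ?_
    rw [real_inner_smul_left, sum_inner]
    refine congrArg _ (Finset.sum_congr rfl fun a _ => ?_)
    rw [real_inner_smul_left, real_inner_smul_left, hLval]
    field_simp [(hπpos θ₀ s a).ne']
  rw [hG]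
  exact hJ
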